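/- r(B(2,2)) = 8: every 2-coloring of the edges of K_8 contains a monochromatic copy of the bistar B(2,2), and there is a 2-coloring of K_7 with no monochromatic B(2,2). -/
import Mathlib

open SimpleGraph

/-- The graph of edges of color `b` in the 2-coloring `c` of a complete graph. -/
def colorGraph {V : Type*} (c : Sym2 V → Bool) (b : Bool) : SimpleGraph V :=
  SimpleGraph.fromRel (fun u v => c s(u, v) = b)

/-- `G` occurs as a (not nec. induced) subgraph of `H`. -/
def ContainsCopy {V W : Type*} (G : SimpleGraph V) (H : SimpleGraph W) : Prop :=
  ∃ f : V → W, Function.Injective f ∧ ∀ ⦃u v : V⦄, G.Adj u v → H.Adj (f u) (f v)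

/-- The coloring `c` contains a monochromatic copy of `G`. -/
def HasMonoCopy {V W : Type*} (G : SimpleGraph V) (c : Sym2 W → Bool) : Prop :=
  ∃ b : Bool, ContainsCopy G (colorGraph c b)

/-- The (diagonal) Ramsey number of a graph `G`. -/
noncomputable def ramseyNumber {V : Type*} (G : SimpleGraph V) : ℕ :=
  sInf {r : ℕ | ∀ c : Sym2 (Fin r) → Bool, HasMonoCopy G c}

/-- The star `S n = K_{1,n}`: center `0`, `n` leaves. -/
def starGraph (n : ℕ) : SimpleGraph (Fin (n + 1)) :=
  SimpleGraph.fromRel (fun u v => u = 0)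

/-- The bistar `B(m,n)`: adjacent centers `inl 0`, `inl 1`, with `m` resp. `n` leaves. -/
def bistar (m n : ℕ) : SimpleGraph (Fin 2 ⊕ Fin m ⊕ Fin n) :=
  SimpleGraph.fromRel (fun u v =>
    (u = Sum.inl 0 ∧ v = Sum.inl 1) ∨
    (u = Sum.inl 0 ∧ ∃ i, v = Sum.inr (Sum.inl i)) ∨
    (u = Sum.inl 1 ∧ ∃ j, v = Sum.inr (Sum.inr j)))

/-! ### Auxiliary machinery -/

lemma colorGraph_adj {V : Type*} (c : Sym2 V → Bool) (b : Bool) (u v : V) :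
    (colorGraph c b).Adj u v ↔ u ≠ v ∧ c s(u,v) = b := by
  rw [colorGraph, SimpleGraph.fromRel_adj]
  constructor
  · rintro ⟨h, h' | h'⟩
    · exact ⟨h, h'⟩
    · exact ⟨h, by rwa [Sym2.eq_swap]⟩
  · rintro ⟨h, h'⟩; exact ⟨h, Or.inl h'⟩

instance colorGraph.instDecidableRelAdj {V : Type*} [DecidableEq V] (c : Sym2 V → Bool)
    (b : Bool) : DecidableRel (colorGraph c b).Adj := fun u v =>
  decidable_of_iff (u ≠ v ∧ c s(u,v) = b) (colorGraph_adj c b u v).symm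

/-- If we have an edge `uv`, two extra neighbours of `u` and two extra neighbours of `v`,
all six distinct, we get a copy of `B(2,2)`. -/
lemma copy_of {W : Type*} (H : SimpleGraph W) {u v a b c d : W}
    (huv : H.Adj u v) (hua : H.Adj u a) (hub : H.Adj u b)
    (hvc : H.Adj v c) (hvd : H.Adj v d)
    (hav : a ≠ v) (hbv : b ≠ v) (hcu : c ≠ u) (hdu : d ≠ u)
    (hab : a ≠ b) (hac : a ≠ c) (had : a ≠ d) (hbc : b ≠ c) (hbd : b ≠ d)
    (hcd : c ≠ d) :
    ContainsCopy (bistar 2 2) H := by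
  refine ⟨Sum.elim ![u, v] (Sum.elim ![a, b] ![c, d]), ?_, ?_⟩
  · have hau := hua.ne'
    have hbu := hub.ne'
    have hcv := hvc.ne'
    have hdv := hvd.ne'
    have huv' := huv.ne
    intro x y hxy
    fin_cases x <;> fin_cases y <;> simp_all
  · intro x y hxy
    have h1 := huv
    fin_cases x <;> fin_cases y <;>
      simp_all [bistar, SimpleGraph.fromRel_adj] <;>
      first | assumption | exact h1.symm | exact hua.symm | exact hub.symm |
        exact hvc.symm | exact hvd.symm

section Graph

variable {W : Type*} [Fintype W] [DecidableEq W] (H : SimpleGraph W) [DecidableRel H.Adj]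

/-- Degree ≥ 5 at one end and ≥ 3 at the other end of an edge forces a `B(2,2)`. -/
lemma copy_of_deg53 {u v : W} (huv : H.Adj u v)
    (hu : 5 ≤ H.degree u) (hv : 3 ≤ H.degree v) :
    ContainsCopy (bistar 2 2) H := by
  have lku : (H.neighborFinset u).card = H.degree u := rfl
  have lkv : (H.neighborFinset v).card = H.degree v := rfl
  have hBcard : ((H.neighborFinset v).erase u).card = H.degree v - 1 :=
    lkv ▸ Finset.card_erase_of_mem ((SimpleGraph.mem_neighborFinset _ _ _).mpr huv.symm)
  obtain ⟨cc, hc, d, hd, hcd⟩ := Finset.one_lt_card.mp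
    (show 1 < ((H.neighborFinset v).erase u).card by omega)
  have h1 : ((H.neighborFinset u).erase v).card = H.degree u - 1 :=
    lku ▸ Finset.card_erase_of_mem ((SimpleGraph.mem_neighborFinset _ _ _).mpr huv)
  have h2 := Finset.pred_card_le_card_erase (s := (H.neighborFinset u).erase v) (a := cc)
  have h3 := Finset.pred_card_le_card_erase
    (s := ((H.neighborFinset u).erase v).erase cc) (a := d)
  obtain ⟨a, ha, b, hb, hab⟩ := Finset.one_lt_card.mp
    (show 1 < ((((H.neighborFinset u).erase v).erase cc).erase d).card by omega)
  simp only [Finset.mem_erase, SimpleGraph.mem_neighborFinset] at ha hb hc hd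
  exact copy_of H huv ha.2.2.2 hb.2.2.2 hc.2 hd.2 ha.2.2.1 hb.2.2.1 hc.1 hd.1
    hab (fun h => ha.2.1 (h ▸ rfl)) (fun h => ha.1 (h ▸ rfl))
    (fun h => hb.2.1 (h ▸ rfl)) (fun h => hb.1 (h ▸ rfl)) hcd

/-- If some extra neighbour of `u` is not an extra neighbour of `v`, and the
neighbourhoods are big enough, we get a `B(2,2)`. -/
lemma copy_of_notsub {u v x : W} (huv : H.Adj u v)
    (hx : x ∈ (H.neighborFinset u).erase v) (hxB : x ∉ (H.neighborFinset v).erase u)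
    (hA : 2 ≤ ((H.neighborFinset u).erase v).card)
    (hB : 3 ≤ ((H.neighborFinset v).erase u).card) :
    ContainsCopy (bistar 2 2) H := by
  have hb : (((H.neighborFinset u).erase v).erase x).Nonempty := by
    rw [← Finset.card_pos, Finset.card_erase_of_mem hx]; omega
  obtain ⟨b, hbmem⟩ := hb
  have herase := Finset.pred_card_le_card_erase (s := (H.neighborFinset v).erase u) (a := b)
  obtain ⟨cc, hc, d, hd, hcdne⟩ := Finset.one_lt_card.mp
    (show 1 < (((H.neighborFinset v).erase u).erase b).card by omega)
  have hbA := Finset.mem_of_mem_erase hbmem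
  have hbx : b ≠ x := Finset.ne_of_mem_erase hbmem
  have hcB := Finset.mem_of_mem_erase hc
  have hdB := Finset.mem_of_mem_erase hd
  have hxA := hx
  simp only [Finset.mem_erase, SimpleGraph.mem_neighborFinset] at hxA hbA hcB hdB
  exact copy_of H huv hxA.2 hbA.2 hcB.2 hdB.2 hxA.1 hbA.1 hcB.1 hdB.1
    (Ne.symm hbx)
    (fun h => hxB (by rw [h]; exact Finset.mem_of_mem_erase hc))
    (fun h => hxB (by rw [h]; exact Finset.mem_of_mem_erase hd))
    (fun h => (Finset.ne_of_mem_erase hc) h.symm)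
    (fun h => (Finset.ne_of_mem_erase hd) h.symm)
    hcdne

end Graph

/-! ### The upper bound : every 2-colouring of `K₈` has a monochromatic `B(2,2)` -/

section Upper

variable (c : Sym2 (Fin 8) → Bool)

lemma deg_add_deg (b : Bool) (v : Fin 8) :
    (colorGraph c b).degree v + (colorGraph c (!b)).degree v = 7 := by
  have hdisj : Disjoint ((colorGraph c b).neighborFinset v)
      ((colorGraph c (!b)).neighborFinset v) := by
    rw [Finset.disjoint_left]
    intro x hx hx'
    rw [SimpleGraph.mem_neighborFinset, colorGraph_adj] at hx hx'
    exact absurd (hx.2.symm.trans hx'.2) (by cases b <;> simp)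
  have hunion : (colorGraph c b).neighborFinset v ∪ (colorGraph c (!b)).neighborFinset v
      = Finset.univ.erase v := by
    ext x
    simp only [Finset.mem_union, SimpleGraph.mem_neighborFinset, colorGraph_adj,
      Finset.mem_erase, Finset.mem_univ, and_true]
    constructor
    · rintro (⟨h, _⟩ | ⟨h, _⟩) <;> exact h.symm
    · intro h
      rcases Bool.eq_or_eq_not (c s(v, x)) b with h' | h'
      · exact Or.inl ⟨Ne.symm h, h'⟩
      · exact Or.inr ⟨Ne.symm h, h'⟩
  have hcard := Finset.card_union_of_disjoint hdisj
  rw [hunion, Finset.card_erase_of_mem (Finset.mem_univ v), Finset.card_univ,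
    Fintype.card_fin] at hcard
  have l1 : ((colorGraph c b).neighborFinset v).card = (colorGraph c b).degree v := rfl
  have l2 : ((colorGraph c (!b)).neighborFinset v).card = (colorGraph c (!b)).degree v := rfl
  omega

lemma upper_bound : HasMonoCopy (bistar 2 2) c := by
  by_contra h
  rw [HasMonoCopy] at h
  push_neg at h
  have hno : ∀ b : Bool, ¬ ContainsCopy (bistar 2 2) (colorGraph c b) := h
  have link : ∀ (b : Bool) (v : Fin 8),
      ((colorGraph c b).neighborFinset v).card = (colorGraph c b).degree v := fun _ _ => rfl
  -- Step 1: every degree is at most 4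
  have hdeg4 : ∀ (b : Bool) (u : Fin 8), (colorGraph c b).degree u ≤ 4 := by
    by_contra hcon
    push_neg at hcon
    obtain ⟨b, u, hu⟩ := hcon
    have hsmall : ∀ w ∈ (colorGraph c b).neighborFinset u, (colorGraph c b).degree w ≤ 2 := by
      intro w hw
      by_contra hw2
      push_neg at hw2
      rw [SimpleGraph.mem_neighborFinset] at hw
      exact hno b (copy_of_deg53 _ hw (by omega) (by omega))
    obtain ⟨t, ht, htc⟩ := Finset.exists_subset_card_eq
      (show 3 ≤ ((colorGraph c b).neighborFinset u).card by rw [link]; omega)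
    obtain ⟨v, w1, w2, hvw1, hvw2, hw12, rfl⟩ := Finset.card_eq_three.mp htc
    have hv : v ∈ (colorGraph c b).neighborFinset u := ht (by simp)
    have hw1 : w1 ∈ (colorGraph c b).neighborFinset u := ht (by simp)
    have hw2 : w2 ∈ (colorGraph c b).neighborFinset u := ht (by simp)
    have hpair : ∀ x y, x ∈ (colorGraph c b).neighborFinset u →
        y ∈ (colorGraph c b).neighborFinset u → x ≠ y → (colorGraph c b).Adj x y := by
      intro x y hxmem hymem hxy
      by_cases hcxy : c s(x, y) = b
      · exact (colorGraph_adj c b x y).mpr ⟨hxy, hcxy⟩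
      · exfalso
        have hadj : (colorGraph c (!b)).Adj x y :=
          (colorGraph_adj c (!b) x y).mpr ⟨hxy, by cases hb' : c s(x,y) <;> cases b <;> simp_all⟩
        have hx2 := hsmall x hxmem
        have hy2 := hsmall y hymem
        have hdx := deg_add_deg c b x
        have hdy := deg_add_deg c b y
        exact hno (!b) (copy_of_deg53 _ hadj (by omega) (by omega))
    have hsub : ({u, w1, w2} : Finset (Fin 8)) ⊆ (colorGraph c b).neighborFinset v := by
      intro x hx
      simp only [Finset.mem_insert, Finset.mem_singleton] at hx
      rw [SimpleGraph.mem_neighborFinset]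
      rcases hx with rfl | rfl | rfl
      · exact ((SimpleGraph.mem_neighborFinset _ _ _).mp hv).symm
      · exact hpair _ _ hv hw1 hvw1
      · exact hpair _ _ hv hw2 hvw2
    have huw1 : u ≠ w1 := fun hh =>
      SimpleGraph.notMem_neighborFinset_self (colorGraph c b) u (hh ▸ hw1)
    have huw2 : u ≠ w2 := fun hh =>
      SimpleGraph.notMem_neighborFinset_self (colorGraph c b) u (hh ▸ hw2)
    have hcard3 : ({u, w1, w2} : Finset (Fin 8)).card = 3 := by
      rw [Finset.card_insert_of_notMem (by simp [huw1, huw2]),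
        Finset.card_insert_of_notMem (by simp [hw12]), Finset.card_singleton]
    have hcle := Finset.card_le_card hsub
    rw [hcard3, link] at hcle
    have := hsmall v hv
    omega
  -- Step 2: every degree is at least 3
  have hdeg3 : ∀ (b : Bool) (u : Fin 8), 3 ≤ (colorGraph c b).degree u := by
    intro b u
    have h1 := deg_add_deg c b u
    have h2 := hdeg4 (!b) u
    omega
  -- Step 3: no b-edge joins two vertices of b-degree 4
  have hkey : ∀ (b : Bool) (u v : Fin 8), (colorGraph c b).degree u = 4 →
      (colorGraph c b).degree v = 4 → ¬ (colorGraph c b).Adj u v := by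
    intro b u v hu4 hv4 huv
    set G := colorGraph c b with hG
    have linkG : ∀ w : Fin 8, (G.neighborFinset w).card = G.degree w := fun _ => rfl
    have hvmem : v ∈ G.neighborFinset u := (SimpleGraph.mem_neighborFinset _ _ _).mpr huv
    have humem : u ∈ G.neighborFinset v := (SimpleGraph.mem_neighborFinset _ _ _).mpr huv.symm
    have hAcard : ((G.neighborFinset u).erase v).card = 3 := by
      rw [Finset.card_erase_of_mem hvmem, linkG, hu4]
    have hBcard : ((G.neighborFinset v).erase u).card = 3 := by
      rw [Finset.card_erase_of_mem humem, linkG, hv4]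
    have hAB : (G.neighborFinset u).erase v = (G.neighborFinset v).erase u := by
      by_cases hsub1 : (G.neighborFinset u).erase v ⊆ (G.neighborFinset v).erase u
      · exact Finset.eq_of_subset_of_card_le hsub1 (by omega)
      · obtain ⟨x, hx1, hx2⟩ := Finset.not_subset.mp hsub1
        exact absurd (copy_of_notsub G huv hx1 hx2 (by omega) (by omega)) (hno b)
    set A := (G.neighborFinset u).erase v with hA
    set S := insert u (insert v A) with hS
    have hclosed : ∀ w ∈ S, G.neighborFinset w ⊆ S := by
      intro w hw
      rw [hS, Finset.mem_insert, Finset.mem_insert] at hw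
      rcases hw with rfl | rfl | hw
      · rw [show G.neighborFinset w = insert v A from (Finset.insert_erase hvmem).symm]
        intro x hx
        rw [hS]
        simp only [Finset.mem_insert] at hx ⊢
        tauto
      · rw [show G.neighborFinset w = insert u A from by
          rw [hAB]; exact (Finset.insert_erase humem).symm]
        intro x hx
        rw [hS]
        simp only [Finset.mem_insert] at hx ⊢
        tauto
      · have huw : G.Adj u w :=
          (SimpleGraph.mem_neighborFinset _ _ _).mp (Finset.mem_of_mem_erase hw)
        have hwu : u ∈ G.neighborFinset w := (SimpleGraph.mem_neighborFinset _ _ _).mpr huw.symm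
        have hwmem : w ∈ G.neighborFinset u := Finset.mem_of_mem_erase hw
        have hsub : (G.neighborFinset w).erase u ⊆ (G.neighborFinset u).erase w := by
          by_contra hns
          obtain ⟨x, hx1, hx2⟩ := Finset.not_subset.mp hns
          have hAcard' : ((G.neighborFinset u).erase w).card = 3 := by
            rw [Finset.card_erase_of_mem hwmem, linkG, hu4]
          have hBcard' : (G.neighborFinset w).card - 1 ≤ ((G.neighborFinset w).erase u).card :=
            Finset.pred_card_le_card_erase
          have hd3 : 3 ≤ G.degree w := hdeg3 b w
          have hlw := linkG w
          exact absurd (copy_of_notsub G huw.symm hx1 hx2 (by omega) (by omega)) (hno b)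
        intro x hx
        by_cases hxu : x = u
        · rw [hS, hxu]; simp
        · have hx' := hsub (Finset.mem_erase.mpr ⟨hxu, hx⟩)
          have hxnb : x ∈ G.neighborFinset u := Finset.mem_of_mem_erase hx'
          have : x ∈ insert v A := by rw [hA, Finset.insert_erase hvmem]; exact hxnb
          rw [hS]
          simp only [Finset.mem_insert] at this ⊢
          tauto
    have huA : u ∉ A := fun hh =>
      SimpleGraph.notMem_neighborFinset_self G u (Finset.mem_of_mem_erase hh)
    have hvA : v ∉ A := fun hh => (Finset.ne_of_mem_erase hh) rfl
    have hScard : S.card = 5 := by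
      rw [hS, Finset.card_insert_of_notMem (by simp [huv.ne, huA]),
        Finset.card_insert_of_notMem hvA, hA, hAcard]
    have hex : ∃ x : Fin 8, x ∉ S := by
      by_contra hx
      push_neg at hx
      have := Finset.eq_univ_iff_forall.mpr hx
      rw [this, Finset.card_univ, Fintype.card_fin] at hScard
      omega
    obtain ⟨x, hxS⟩ := hex
    have hSsub : S ⊆ (colorGraph c (!b)).neighborFinset x := by
      intro w hw
      rw [SimpleGraph.mem_neighborFinset, colorGraph_adj]
      have hwx : x ≠ w := fun hh => hxS (hh ▸ hw)
      refine ⟨hwx, ?_⟩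
      rcases Bool.eq_or_eq_not (c s(x, w)) b with h' | h'
      · exfalso
        have hxmem : x ∈ G.neighborFinset w := by
          rw [SimpleGraph.mem_neighborFinset, hG, colorGraph_adj]
          exact ⟨fun hh => hwx hh.symm, by rwa [Sym2.eq_swap]⟩
        exact hxS (hclosed w hw hxmem)
      · exact h'
    have hcle := Finset.card_le_card hSsub
    rw [hScard, link] at hcle
    have h4 := hdeg4 (!b) x
    omega
  -- Step 4: counting
  set R4 := Finset.univ.filter (fun v : Fin 8 => (colorGraph c true).degree v = 4) with hR4
  have hmemR4 : ∀ v : Fin 8, v ∈ R4 ↔ (colorGraph c true).degree v = 4 := by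
    intro v; rw [hR4, Finset.mem_filter]; simp
  have hmem4 : ∀ v : Fin 8, v ∉ R4 → (colorGraph c false).degree v = 4 := by
    intro v hv
    rw [hmemR4] at hv
    have h1 : (colorGraph c true).degree v + (colorGraph c false).degree v = 7 :=
      deg_add_deg c true v
    have h2 := hdeg4 true v
    have h3 := hdeg3 true v
    omega
  have hfalse3 : ∀ v ∈ R4, (colorGraph c false).degree v = 3 := by
    intro v hv
    rw [hmemR4] at hv
    have h1 : (colorGraph c true).degree v + (colorGraph c false).degree v = 7 :=
      deg_add_deg c true v
    omega
  have htrue3 : ∀ v : Fin 8, v ∉ R4 → (colorGraph c true).degree v = 3 := by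
    intro v hv
    have h1 : (colorGraph c true).degree v + (colorGraph c false).degree v = 7 :=
      deg_add_deg c true v
    have h2 := hmem4 v hv
    omega
  have hinR4 : ∀ u ∈ R4, ∀ v ∈ R4, u ≠ v → (colorGraph c false).Adj u v := by
    intro u hu v hv huvne
    have hnb := hkey true u v ((hmemR4 u).mp hu) ((hmemR4 v).mp hv)
    rcases Bool.eq_or_eq_not (c s(u,v)) true with h' | h'
    · exact absurd ((colorGraph_adj c true u v).mpr ⟨huvne, h'⟩) hnb
    · exact (colorGraph_adj c false u v).mpr ⟨huvne, by simpa using h'⟩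
  have hinR4c : ∀ u ∈ Finset.univ \ R4, ∀ v ∈ Finset.univ \ R4, u ≠ v →
      (colorGraph c true).Adj u v := by
    intro u hu v hv huvne
    rw [Finset.mem_sdiff] at hu hv
    have hnb := hkey false u v (hmem4 u hu.2) (hmem4 v hv.2)
    rcases Bool.eq_or_eq_not (c s(u,v)) true with h' | h'
    · exact (colorGraph_adj c true u v).mpr ⟨huvne, h'⟩
    · exact absurd ((colorGraph_adj c false u v).mpr ⟨huvne, by simpa using h'⟩) hnb
  have hcardR4 : R4.card = 4 := by
    have hle : R4.card ≤ 4 := by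
      by_contra hc5
      push_neg at hc5
      obtain ⟨u, hu⟩ := Finset.card_pos.mp (by omega : 0 < R4.card)
      have hsub : R4.erase u ⊆ (colorGraph c false).neighborFinset u := by
        intro v hv
        rw [SimpleGraph.mem_neighborFinset]
        exact hinR4 u hu v (Finset.mem_of_mem_erase hv) (Ne.symm (Finset.ne_of_mem_erase hv))
      have h1 := Finset.card_le_card hsub
      rw [Finset.card_erase_of_mem hu, link] at h1
      have h2 := hfalse3 u hu
      omega
    have hge : 4 ≤ R4.card := by
      by_contra hc3
      push_neg at hc3
      have hcompl : 5 ≤ (Finset.univ \ R4).card := by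
        rw [Finset.card_sdiff_of_subset (Finset.subset_univ _), Finset.card_univ, Fintype.card_fin]
        omega
      obtain ⟨u, hu⟩ := Finset.card_pos.mp (by omega : 0 < (Finset.univ \ R4).card)
      have hsub : (Finset.univ \ R4).erase u ⊆ (colorGraph c true).neighborFinset u := by
        intro v hv
        rw [SimpleGraph.mem_neighborFinset]
        exact hinR4c u hu v (Finset.mem_of_mem_erase hv) (Ne.symm (Finset.ne_of_mem_erase hv))
      have h1 := Finset.card_le_card hsub
      rw [Finset.card_erase_of_mem hu, link] at h1
      rw [Finset.mem_sdiff] at hu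
      have h3 := htrue3 u hu.2
      omega
    omega
  obtain ⟨u, hu⟩ := Finset.card_pos.mp (by omega : 0 < R4.card)
  have hcompl4 : (Finset.univ \ R4).card = 4 := by
    rw [Finset.card_sdiff_of_subset (Finset.subset_univ _), Finset.card_univ, Fintype.card_fin, hcardR4]
  obtain ⟨v, hv⟩ := Finset.card_pos.mp (by omega : 0 < (Finset.univ \ R4).card)
  have huvne : u ≠ v := by
    intro hh
    rw [Finset.mem_sdiff] at hv
    exact hv.2 (hh ▸ hu)
  have hsubu : R4.erase u ⊆ (colorGraph c false).neighborFinset u := by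
    intro w hw
    rw [SimpleGraph.mem_neighborFinset]
    exact hinR4 u hu w (Finset.mem_of_mem_erase hw) (Ne.symm (Finset.ne_of_mem_erase hw))
  have hequ : R4.erase u = (colorGraph c false).neighborFinset u := by
    apply Finset.eq_of_subset_of_card_le hsubu
    rw [Finset.card_erase_of_mem hu, hcardR4, link, hfalse3 u hu]
  have hsubv : (Finset.univ \ R4).erase v ⊆ (colorGraph c true).neighborFinset v := by
    intro w hw
    rw [SimpleGraph.mem_neighborFinset]
    exact hinR4c v hv w (Finset.mem_of_mem_erase hw) (Ne.symm (Finset.ne_of_mem_erase hw))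
  have heqv : (Finset.univ \ R4).erase v = (colorGraph c true).neighborFinset v := by
    apply Finset.eq_of_subset_of_card_le hsubv
    rw [Finset.mem_sdiff] at hv
    rw [Finset.card_erase_of_mem (Finset.mem_sdiff.mpr hv), hcompl4, link, htrue3 v hv.2]
  rcases Bool.eq_or_eq_not (c s(u,v)) true with h' | h'
  · have hmem : u ∈ (colorGraph c true).neighborFinset v := by
      rw [SimpleGraph.mem_neighborFinset, colorGraph_adj]
      exact ⟨huvne.symm, by rwa [Sym2.eq_swap]⟩
    rw [← heqv] at hmem
    have hmem' := Finset.mem_of_mem_erase hmem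
    rw [Finset.mem_sdiff] at hmem'
    exact hmem'.2 hu
  · have hmem : v ∈ (colorGraph c false).neighborFinset u := by
      rw [SimpleGraph.mem_neighborFinset, colorGraph_adj]
      exact ⟨huvne, by simpa using h'⟩
    rw [← hequ] at hmem
    have hmem' := Finset.mem_of_mem_erase hmem
    rw [Finset.mem_sdiff] at hv
    exact hv.2 hmem'
end Upper

/-! ### The lower bound : a 2-colouring of `K₇` with no monochromatic `B(2,2)` -/

def c7 : Sym2 (Fin 7) → Bool :=
  Sym2.lift ⟨fun u v => decide (¬ (u.val ≤ 1 ↔ v.val ≤ 1)),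
    fun u v => decide_eq_decide.mpr (by tauto)⟩

lemma c7_eval (x y : Fin 7) : c7 s(x, y) = decide (¬ (x.val ≤ 1 ↔ y.val ≤ 1)) :=
  rfl

lemma not_iff_left {p q : Prop} (h : ¬(p ↔ q)) (hp : p) : ¬q :=
  fun hq => h ⟨fun _ => hq, fun _ => hp⟩

lemma not_iff_right {p q : Prop} (h : ¬(p ↔ q)) (hp : ¬p) : q := by
  by_contra hq
  exact h ⟨fun hp' => absurd hp' hp, fun hq' => absurd hq' hq⟩

lemma no_mono_c7 : ¬ HasMonoCopy (bistar 2 2) c7 := by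
  rintro ⟨b, f, hinj, hadj⟩
  have hedge : ∀ (x y : Fin 2 ⊕ Fin 2 ⊕ Fin 2), (bistar 2 2).Adj x y →
      f x ≠ f y ∧ c7 s(f x, f y) = b := by
    intro x y hxy
    have := hadj hxy
    rwa [colorGraph_adj] at this
  have h01 : (bistar 2 2).Adj (Sum.inl 0) (Sum.inl 1) := by
    rw [bistar, SimpleGraph.fromRel_adj]; simp
  have h0a : (bistar 2 2).Adj (Sum.inl 0) (Sum.inr (Sum.inl 0)) := by
    rw [bistar, SimpleGraph.fromRel_adj]; simp
  have h0b : (bistar 2 2).Adj (Sum.inl 0) (Sum.inr (Sum.inl 1)) := by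
    rw [bistar, SimpleGraph.fromRel_adj]; simp
  have h1c : (bistar 2 2).Adj (Sum.inl 1) (Sum.inr (Sum.inr 0)) := by
    rw [bistar, SimpleGraph.fromRel_adj]; simp
  have h1d : (bistar 2 2).Adj (Sum.inl 1) (Sum.inr (Sum.inr 1)) := by
    rw [bistar, SimpleGraph.fromRel_adj]; simp
  obtain ⟨huv, cuv⟩ := hedge _ _ h01
  obtain ⟨hua, cua⟩ := hedge _ _ h0a
  obtain ⟨hua', cua'⟩ := hedge _ _ h0b
  obtain ⟨hve, cve⟩ := hedge _ _ h1c
  obtain ⟨hve', cve'⟩ := hedge _ _ h1d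
  set u := f (Sum.inl 0) with hu
  set v := f (Sum.inl 1) with hv
  set a := f (Sum.inr (Sum.inl 0)) with ha
  set a' := f (Sum.inr (Sum.inl 1)) with ha'
  set e := f (Sum.inr (Sum.inr 0)) with he
  set e' := f (Sum.inr (Sum.inr 1)) with he'
  have hd : ∀ (x y : Fin 2 ⊕ Fin 2 ⊕ Fin 2), x ≠ y → f x ≠ f y :=
    fun x y hxy hh => hxy (hinj hh)
  -- all pairwise distinct
  have m12 : u ≠ v := huv
  have m13 : u ≠ a := hua
  have m14 : u ≠ a' := hua'
  have m15 : u ≠ e := hd (Sum.inl 0) (Sum.inr (Sum.inr 0)) (by simp)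
  have m16 : u ≠ e' := hd (Sum.inl 0) (Sum.inr (Sum.inr 1)) (by simp)
  have m23 : v ≠ a := hd (Sum.inl 1) (Sum.inr (Sum.inl 0)) (by simp)
  have m24 : v ≠ a' := hd (Sum.inl 1) (Sum.inr (Sum.inl 1)) (by simp)
  have m25 : v ≠ e := hve
  have m26 : v ≠ e' := hve'
  have m34 : a ≠ a' := hd (Sum.inr (Sum.inl 0)) (Sum.inr (Sum.inl 1)) (by simp)
  have m35 : a ≠ e := hd (Sum.inr (Sum.inl 0)) (Sum.inr (Sum.inr 0)) (by simp)
  have m36 : a ≠ e' := hd (Sum.inr (Sum.inl 0)) (Sum.inr (Sum.inr 1)) (by simp)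
  have m45 : a' ≠ e := hd (Sum.inr (Sum.inl 1)) (Sum.inr (Sum.inr 0)) (by simp)
  have m46 : a' ≠ e' := hd (Sum.inr (Sum.inl 1)) (Sum.inr (Sum.inr 1)) (by simp)
  have m56 : e ≠ e' := hd (Sum.inr (Sum.inr 0)) (Sum.inr (Sum.inr 1)) (by simp)
  rw [c7_eval] at cuv cua cua' cve cve'
  clear_value u v a a' e e'
  cases b with
  | true =>
    rw [decide_eq_true_eq] at cuv cua cua' cve cve'
    by_cases hu1 : u.val ≤ 1
    · -- v, a, a' on the big side; e, e' on the small side with u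
      have pv : ¬ v.val ≤ 1 := not_iff_left cuv hu1
      have pe : e.val ≤ 1 := not_iff_right cve pv
      have pe' : e'.val ≤ 1 := not_iff_right cve' pv
      have q1 : u.val ≠ e.val := fun hh => m15 (Fin.val_injective hh)
      have q2 : u.val ≠ e'.val := fun hh => m16 (Fin.val_injective hh)
      have q3 : e.val ≠ e'.val := fun hh => m56 (Fin.val_injective hh)
      omega
    · have pv : v.val ≤ 1 := not_iff_right cuv hu1
      have pa : a.val ≤ 1 := not_iff_right cua hu1
      have pa' : a'.val ≤ 1 := not_iff_right cua' hu1
      have q1 : v.val ≠ a.val := fun hh => m23 (Fin.val_injective hh)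
      have q2 : v.val ≠ a'.val := fun hh => m24 (Fin.val_injective hh)
      have q3 : a.val ≠ a'.val := fun hh => m34 (Fin.val_injective hh)
      omega
  | false =>
    rw [decide_eq_false_iff_not, not_not] at cuv cua cua' cve cve'
    by_cases hu1 : u.val ≤ 1
    · have pv : v.val ≤ 1 := cuv.mp hu1
      have pa : a.val ≤ 1 := cua.mp hu1
      have q1 : u.val ≠ v.val := fun hh => m12 (Fin.val_injective hh)
      have q2 : u.val ≠ a.val := fun hh => m13 (Fin.val_injective hh)
      have q3 : v.val ≠ a.val := fun hh => m23 (Fin.val_injective hh)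
      omega
    · -- all six vertices have value ≥ 2 : pigeonhole in a 5-element set
      have pv : ¬ v.val ≤ 1 := fun hh => hu1 (cuv.mpr hh)
      have pa : ¬ a.val ≤ 1 := fun hh => hu1 (cua.mpr hh)
      have pa' : ¬ a'.val ≤ 1 := fun hh => hu1 (cua'.mpr hh)
      have pe : ¬ e.val ≤ 1 := fun hh => pv (cve.mpr hh)
      have pe' : ¬ e'.val ≤ 1 := fun hh => pv (cve'.mpr hh)
      have hsub : ({u, v, a, a', e, e'} : Finset (Fin 7)) ⊆
          Finset.univ.filter (fun x : Fin 7 => 2 ≤ x.val) := by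
        intro x hx
        rw [Finset.mem_filter]
        refine ⟨Finset.mem_univ x, ?_⟩
        simp only [Finset.mem_insert, Finset.mem_singleton] at hx
        rcases hx with rfl | rfl | rfl | rfl | rfl | rfl <;> omega
      have hcard : ({u, v, a, a', e, e'} : Finset (Fin 7)).card = 6 := by
        rw [Finset.card_insert_of_notMem (by simp [m12, m13, m14, m15, m16]),
          Finset.card_insert_of_notMem (by simp [m23, m24, m25, m26]),
          Finset.card_insert_of_notMem (by simp [m34, m35, m36]),
          Finset.card_insert_of_notMem (by simp [m45, m46]),
          Finset.card_insert_of_notMem (by simp [m56]), Finset.card_singleton]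
      have hfil : (Finset.univ.filter (fun x : Fin 7 => 2 ≤ x.val)).card = 5 := rfl
      have hle := Finset.card_le_card hsub
      rw [hcard, hfil] at hle
      omega

lemma no_mono_restrict {r : ℕ} (hr : r ≤ 7) :
    ¬ HasMonoCopy (bistar 2 2) (fun s : Sym2 (Fin r) => c7 (s.map (Fin.castLE hr))) := by
  rintro ⟨b, f, hinj, hadj⟩
  apply no_mono_c7
  refine ⟨b, Fin.castLE hr ∘ f, (Fin.castLE_injective hr).comp hinj, ?_⟩
  intro x y hxy
  have h2 := hadj hxy
  rw [colorGraph_adj] at h2 ⊢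
  refine ⟨fun hh => h2.1 ((Fin.castLE_injective hr) hh), ?_⟩
  rw [← h2.2]
  simp [Sym2.map_pair_eq]

theorem bistar_two_two_ramsey :
    ramseyNumber (bistar 2 2) = 8 ∧
    (∀ c : Sym2 (Fin 8) → Bool, HasMonoCopy (bistar 2 2) c) ∧
    (∃ c : Sym2 (Fin 7) → Bool, ¬ HasMonoCopy (bistar 2 2) c) := by
  refine ⟨?_, upper_bound, ⟨c7, no_mono_c7⟩⟩
  have h8 : 8 ∈ {r : ℕ | ∀ c : Sym2 (Fin r) → Bool, HasMonoCopy (bistar 2 2) c} :=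
    fun c => upper_bound c
  apply le_antisymm
  · exact Nat.sInf_le h8
  · apply le_csInf ⟨8, h8⟩
    intro r hr
    by_contra hlt
    push_neg at hlt
    have hr7 : r ≤ 7 := by omega
    exact no_mono_restrict hr7 (hr _)
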